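/- Let X = {x_1, ..., x_n} be a finite set of distinct integers each greater than 1, let D = {1, 0} ∪ X, and let (T,s) be a signed tree realizing D whose underlying tree has the minimum possible number of vertices among all signed trees realizing D. If uv is the unique edge of T with s(uv) = −, then deg(u) = 2 and deg(v) = 2. -/

import Mathlib

/-- A signed tree: a finite tree (on vertex type `Fin n`) together with an
assignment of a sign to each possible edge (`true` = positive, `false` = negative). -/
structure SignedTree where
  n : ℕ
  G : SimpleGraph (Fin n)
  adjDec : DecidableRel G.Adj
  isTree : G.IsTree
  sgn : Sym2 (Fin n) → Bool

namespace SignedTree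

/-- The (unsigned) degree of a vertex in the underlying tree. -/
def deg (T : SignedTree) (v : Fin T.n) : ℕ :=
  letI := T.adjDec
  T.G.degree v

/-- The signed degree of a vertex: the number of positive edges incident to it
minus the number of negative edges incident to it. -/
def sdeg (T : SignedTree) (v : Fin T.n) : ℤ :=
  letI := T.adjDec
  ((((T.G.neighborFinset v).filter fun w => T.sgn s(v, w) = true).card : ℤ)) -
  ((((T.G.neighborFinset v).filter fun w => T.sgn s(v, w) = false).card : ℤ))

/-- The signed tree `T` realizes the set `D` if `D` is exactly the set of signed
degrees of the vertices of `T`. -/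
def Realizes (T : SignedTree) (D : Set ℤ) : Prop :=
  D = Set.range T.sdeg

end SignedTree

/-- `diamOfSet D` is the minimum diameter of the underlying tree over all
signed trees realizing `D`. -/
noncomputable def diamOfSet (D : Set ℤ) : ℕ :=
  sInf {k : ℕ | ∃ T : SignedTree, T.Realizes D ∧ T.G.diam = k}

/-- `orderOfSet D` is the minimum number of vertices of the underlying tree over
all signed trees realizing `D`. -/
noncomputable def orderOfSet (D : Set ℤ) : ℕ :=
  sInf {k : ℕ | ∃ T : SignedTree, T.Realizes D ∧ T.n = k}

/-!
If `uv` is the only negative edge, every vertex other than `u` and `v` has signed degree equal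
to its degree, while `u` and `v` lose `2`; hence the signed degrees add up to `2n - 6`.
Suppose `deg u ≠ 2`. Since all signed degrees are `≥ 0`, `sdeg u ≥ 1`, so every vertex
except `v` has signed degree `≥ 1` and the value `0` must be taken at `v`. The other vertices
then take every value of `{1} ∪ X`, and summing `sdeg - 1` over them gives
`n - 5 ≥ ΣX - |X|`. On the other hand, starting from the path `+ − +` on four vertices and
hanging, for each `x ∈ X`, `x - 1` new leaves on a vertex of signed degree `1` realizes `D`
with `ΣX - |X| + 4` vertices, contradicting optimality.
-/

open Finset SimpleGraph

attribute [local instance] SignedTree.adjDec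

theorem Finset.sum_le_sum_of_subset_image {ι κ M : Type*} [DecidableEq κ] [AddCommMonoid M]
    [PartialOrder M] [IsOrderedAddMonoid M] {s : Finset ι} {t : Finset κ} {f : ι → κ}
    {g : κ → M} (ht : t ⊆ s.image f) (hg : ∀ i ∈ s, 0 ≤ g (f i)) :
    ∑ b ∈ t, g b ≤ ∑ i ∈ s, g (f i) := by
  have hg' : ∀ b ∈ s.image f, 0 ≤ g b := by
    simp only [mem_image]
    rintro b ⟨i, hi, rfl⟩
    exact hg i hi
  exact (sum_le_sum_of_subset_of_nonneg ht fun b hb _ => hg' b hb).trans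
    (sum_image_le_of_nonneg hg')

namespace SimpleGraph

variable {n : ℕ} {G : SimpleGraph (Fin n)}

theorem map_castSuccEmb_adj_castSucc {i j : Fin n} :
    (G.map Fin.castSuccEmb).Adj i.castSucc j.castSucc ↔ G.Adj i j :=
  map_adj_apply (f := Fin.castSuccEmb)

theorem not_map_castSuccEmb_adj_last (G : SimpleGraph (Fin n)) (x : Fin (n + 1)) :
    ¬ (G.map Fin.castSuccEmb).Adj x (Fin.last n) := by
  rintro ⟨-, u, w, -, -, hw⟩
  exact Fin.castSucc_ne_last w hw

theorem IsTree.map_castSucc_sup_edge_last (hG : G.IsTree) (a : Fin n) :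
    (G.map Fin.castSuccEmb ⊔ edge a.castSucc (Fin.last n)).IsTree := by
  classical
  set H := G.map Fin.castSuccEmb ⊔ edge a.castSucc (Fin.last n)
  have hreach : ∀ x, H.Reachable a.castSucc x := by
    refine Fin.lastCases ?_ fun i => ?_
    · exact Adj.reachable (Or.inr (by simp [edge_adj, Fin.castSucc_ne_last]))
    · exact ((hG.connected.preconnected a i).map
        (Embedding.map Fin.castSuccEmb G).toHom).mono le_sup_left
  have : Nonempty (Fin (n + 1)) := ⟨Fin.last n⟩
  refine isTree_iff_connected_and_card.mpr ⟨⟨fun x y => (hreach x).symm.trans (hreach y)⟩, ?_⟩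
  have hmap : #(G.map Fin.castSuccEmb).edgeFinset = #G.edgeFinset := by
    convert card_edgeFinset_map Fin.castSuccEmb G
  have htree := hG.card_edgeFinset
  rw [Fintype.card_fin] at htree
  rw [Nat.card_eq_fintype_card, ← edgeFinset_card,
    card_edgeFinset_sup_edge _ (not_map_castSuccEmb_adj_last G _) (Fin.castSucc_ne_last a),
    Nat.card_eq_fintype_card, Fintype.card_fin]
  omega

end SimpleGraph

namespace SignedTree

theorem sdeg_eq_sum (T : SignedTree) (v : Fin T.n) :
    T.sdeg v = ∑ w ∈ T.G.neighborFinset v, if T.sgn s(v, w) then 1 else -1 := by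
  rw [sum_ite, sum_const, sum_const]
  simp [sdeg, sub_eq_add_neg]

theorem sdeg_eq_deg_sub (T : SignedTree) (v : Fin T.n) :
    T.sdeg v = T.deg v - 2 * #{w ∈ T.G.neighborFinset v | T.sgn s(v, w) = false} := by
  have hsplit := card_filter_add_card_filter_not
    (s := T.G.neighborFinset v) (p := fun w => T.sgn s(v, w) = false)
  simp only [Bool.not_eq_false] at hsplit
  rw [sdeg, deg, ← card_neighborFinset_eq_degree, ← hsplit]
  push_cast
  ring

theorem sum_deg (T : SignedTree) : ∑ v, (T.deg v : ℤ) = 2 * T.n - 2 := by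
  have hsum := T.G.sum_degrees_eq_twice_card_edges
  have hcard := T.isTree.card_edgeFinset
  rw [Fintype.card_fin] at hcard
  simp only [deg]
  rw [← Nat.cast_sum, hsum]
  omega

structure IsUniqueNegEdge (T : SignedTree) (u v : Fin T.n) : Prop where
  adj : T.G.Adj u v
  sgn_eq : T.sgn s(u, v) = false
  eq_of_sgn_eq : ∀ e ∈ T.G.edgeSet, T.sgn e = false → e = s(u, v)

namespace IsUniqueNegEdge

variable {T : SignedTree} {u v : Fin T.n}

theorem symm (h : T.IsUniqueNegEdge u v) : T.IsUniqueNegEdge v u where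
  adj := h.adj.symm
  sgn_eq := Sym2.eq_swap ▸ h.sgn_eq
  eq_of_sgn_eq e he hsgn := (h.eq_of_sgn_eq e he hsgn).trans Sym2.eq_swap

theorem sgn_eq_false_iff (h : T.IsUniqueNegEdge u v) {w x : Fin T.n} (hwx : T.G.Adj w x) :
    T.sgn s(w, x) = false ↔ s(w, x) = s(u, v) :=
  ⟨h.eq_of_sgn_eq _ hwx, fun he => he ▸ h.sgn_eq⟩

theorem sdeg_left (h : T.IsUniqueNegEdge u v) : T.sdeg u = T.deg u - 2 := by
  have hneg : {w ∈ T.G.neighborFinset u | T.sgn s(u, w) = false} = {v} := by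
    ext w
    simp only [mem_filter, mem_neighborFinset, mem_singleton]
    constructor
    · rintro ⟨hw, hsgn⟩
      rcases Sym2.eq_iff.mp ((h.sgn_eq_false_iff hw).mp hsgn) with ⟨-, rfl⟩ | ⟨rfl, rfl⟩
      · rfl
      · exact absurd hw T.G.irrefl
    · rintro rfl
      exact ⟨h.adj, h.sgn_eq⟩
  rw [sdeg_eq_deg_sub, hneg, card_singleton]
  ring

theorem sdeg_of_ne (h : T.IsUniqueNegEdge u v) {w : Fin T.n} (hu : w ≠ u) (hv : w ≠ v) :
    T.sdeg w = T.deg w := by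
  have hneg : {x ∈ T.G.neighborFinset w | T.sgn s(w, x) = false} = ∅ := by
    refine filter_eq_empty_iff.mpr fun x hx hsgn => ?_
    rcases Sym2.eq_iff.mp ((h.sgn_eq_false_iff ((mem_neighborFinset _ _ _).mp hx)).mp hsgn)
      with ⟨rfl, -⟩ | ⟨rfl, -⟩
    exacts [hu rfl, hv rfl]
  rw [sdeg_eq_deg_sub, hneg, card_empty]
  ring

theorem sum_sdeg (h : T.IsUniqueNegEdge u v) : ∑ w, T.sdeg w = 2 * T.n - 6 := by
  have hsdeg : ∀ w,
      T.sdeg w = T.deg w - (if w = u then 2 else 0) - (if w = v then 2 else 0) := by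
    intro w
    by_cases hu : w = u
    · subst hu
      simp [h.sdeg_left, h.adj.ne]
    · by_cases hv : w = v
      · subst hv
        simp [h.symm.sdeg_left, hu]
      · simp [h.sdeg_of_ne hu hv, hu, hv]
  simp only [hsdeg, sum_sub_distrib, sum_ite_eq', mem_univ, if_true, sum_deg]
  ring

theorem one_le_sdeg (h : T.IsUniqueNegEdge u v) (hu : 3 ≤ T.deg u) {w : Fin T.n}
    (hw : w ≠ v) : 1 ≤ T.sdeg w := by
  by_cases hwu : w = u
  · subst hwu
    rw [h.sdeg_left]
    omega
  · have : Nontrivial (Fin T.n) := ⟨u, v, h.adj.ne⟩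
    rw [h.sdeg_of_ne hwu hw]
    exact_mod_cast T.isTree.connected.preconnected.degree_pos_of_nontrivial w

theorem sum_erase_sdeg_sub_one (h : T.IsUniqueNegEdge u v) :
    ∑ w ∈ univ.erase v, (T.sdeg w - 1) = T.n - 5 - T.sdeg v := by
  have : 1 ≤ T.n := Fin.pos u
  rw [sum_sub_distrib, sum_erase_eq_sub (mem_univ v), h.sum_sdeg, sum_const,
    card_erase_of_mem (mem_univ v), card_univ, Fintype.card_fin, nsmul_eq_mul, mul_one]
  push_cast [this]
  ring

theorem sum_sub_card_add_five_le (h : T.IsUniqueNegEdge u v) {X : Finset ℤ}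
    (hx : ∀ x ∈ X, 1 < x) (hT : T.Realizes (insert 1 (insert 0 ↑X))) (hu : T.deg u ≠ 2) :
    ∑ x ∈ X, x - #X + 5 ≤ T.n := by
  have hmem : ∀ z, z ∈ Set.range T.sdeg ↔ z = 1 ∨ z = 0 ∨ z ∈ X := by
    intro z
    rw [← hT]
    simp
  have hnonneg : ∀ w, 0 ≤ T.sdeg w := by
    intro w
    rcases (hmem _).mp ⟨w, rfl⟩ with h1 | h0 | hX
    · omega
    · omega
    · linarith [hx _ hX]
  have hpos : ∀ w ≠ v, 1 ≤ T.sdeg w :=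
    fun w => h.one_le_sdeg (by have := hnonneg u; rw [h.sdeg_left] at this; omega)
  have hv : T.sdeg v = 0 := by
    obtain ⟨w, hw⟩ := (hmem 0).mpr (Or.inr (Or.inl rfl))
    by_contra hne
    have := hpos w (by rintro rfl; exact hne hw)
    omega
  have hsub : insert 1 X ⊆ (univ.erase v).image T.sdeg := by
    intro z hz
    rw [mem_insert] at hz
    obtain ⟨w, rfl⟩ := (hmem z).mpr (by tauto)
    refine mem_image_of_mem _ (mem_erase_of_ne_of_mem (fun hw => ?_) (mem_univ w))
    rcases hz with h1 | hX
    · rw [hw, hv] at h1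
      omega
    · linarith [hx _ hX, hw ▸ hv]
  have key := sum_le_sum_of_subset_image (g := fun z => z - 1) hsub fun w hw =>
    by simpa using hpos w (ne_of_mem_erase hw)
  have h1X : (1 : ℤ) ∉ X := fun h1 => (hx 1 h1).false
  rw [h.sum_erase_sdeg_sub_one, hv, sum_insert h1X, sum_sub_distrib, sum_const, nsmul_eq_mul,
    mul_one] at key
  linarith

end IsUniqueNegEdge

/-- Positive on edges at the new vertex `Fin.last n`; any other edge keeps the sign of its
retraction to `Fin n` by `Fin.lastCases a id`. -/
def extendSign {n : ℕ} (sgn : Sym2 (Fin n) → Bool) (a : Fin n) (e : Sym2 (Fin (n + 1))) :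
    Bool :=
  decide (Fin.last n ∈ e) || sgn (e.map (Fin.lastCases (motive := fun _ => Fin n) a id))

theorem extendSign_castSucc {n : ℕ} (sgn : Sym2 (Fin n) → Bool) (a i j : Fin n) :
    extendSign sgn a s(i.castSucc, j.castSucc) = sgn s(i, j) := by
  simp [extendSign, (Fin.castSucc_ne_last _).symm]

theorem extendSign_last {n : ℕ} (sgn : Sym2 (Fin n) → Bool) (a : Fin n) (x : Fin (n + 1)) :
    extendSign sgn a s(x, Fin.last n) = true := by
  simp [extendSign]

/-- An `abbrev`, so that instance search sees `Fin (T.addLeaf a).n` as `Fin (T.n + 1)`. -/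
abbrev addLeaf (T : SignedTree) (a : Fin T.n) : SignedTree where
  n := T.n + 1
  G := T.G.map Fin.castSuccEmb ⊔ edge a.castSucc (Fin.last T.n)
  adjDec := inferInstance
  isTree := T.isTree.map_castSucc_sup_edge_last a
  sgn := extendSign T.sgn a

section AddLeaf

variable (T : SignedTree) (a : Fin T.n)

theorem neighborFinset_addLeaf_castSucc (w : Fin T.n) :
    (T.addLeaf a).G.neighborFinset w.castSucc =
      (T.G.neighborFinset w).map Fin.castSuccEmb ∪ if w = a then {Fin.last T.n} else ∅ := by
  ext x
  induction x using Fin.lastCases with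
  | last =>
    rw [mem_neighborFinset, sup_adj, or_iff_right (not_map_castSuccEmb_adj_last _ _)]
    by_cases h : w = a <;> simp [h, edge_adj, Fin.castSucc_ne_last]
  | cast i =>
    rw [mem_neighborFinset, sup_adj, map_castSuccEmb_adj_castSucc]
    by_cases h : w = a <;> simp [h, edge_adj, Fin.castSucc_ne_last]

theorem sdeg_addLeaf_castSucc (w : Fin T.n) :
    (T.addLeaf a).sdeg w.castSucc = T.sdeg w + if w = a then 1 else 0 := by
  rw [sdeg_eq_sum, sdeg_eq_sum, neighborFinset_addLeaf_castSucc, sum_union, sum_map]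
  · simp only [Fin.coe_castSuccEmb]
    split_ifs <;> simp [extendSign_castSucc, extendSign_last]
  · split_ifs <;> simp [Fin.castSucc_ne_last]

theorem sdeg_addLeaf_last : (T.addLeaf a).sdeg (Fin.last T.n) = 1 := by
  have hN : (T.addLeaf a).G.neighborFinset (Fin.last T.n) = {a.castSucc} := by
    ext x
    rw [mem_neighborFinset, sup_adj,
      or_iff_right fun h => not_map_castSuccEmb_adj_last _ _ h.symm, edge_adj]
    grind [Fin.castSucc_ne_last]
  rw [sdeg_eq_sum, hN, sum_singleton, Sym2.eq_swap]
  simp [extendSign_last]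

theorem image_sdeg_addLeaf_compl :
    (T.addLeaf a).sdeg '' {a.castSucc}ᶜ = insert 1 (T.sdeg '' {a}ᶜ) := by
  ext z
  constructor
  · rintro ⟨x, hx, rfl⟩
    induction x using Fin.lastCases with
    | last => exact Or.inl (sdeg_addLeaf_last T a)
    | cast i =>
      have hi : i ≠ a := fun h => hx (congrArg Fin.castSucc h)
      exact Or.inr ⟨i, hi, by simp [sdeg_addLeaf_castSucc, hi]⟩
  · rintro (rfl | ⟨i, hi, rfl⟩)
    · exact ⟨Fin.last T.n, (Fin.castSucc_ne_last a).symm, sdeg_addLeaf_last T a⟩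
    · exact ⟨i.castSucc, fun h => hi (Fin.castSucc_injective _ h), by
        simp [sdeg_addLeaf_castSucc, show i ≠ a from hi]⟩

theorem exists_addLeaves (k : ℕ) :
    ∃ (T' : SignedTree) (a' : Fin T'.n), T'.n = T.n + (k + 1) ∧
      T'.sdeg a' = T.sdeg a + (k + 1) ∧ T'.sdeg '' {a'}ᶜ = insert 1 (T.sdeg '' {a}ᶜ) := by
  induction k with
  | zero =>
    exact ⟨T.addLeaf a, a.castSucc, rfl, by simp [sdeg_addLeaf_castSucc],
      image_sdeg_addLeaf_compl T a⟩
  | succ k ih =>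
    obtain ⟨T', a', hn, hsdeg, himage⟩ := ih
    refine ⟨T'.addLeaf a', a'.castSucc, show T'.n + 1 = _ by omega, ?_, ?_⟩
    · rw [sdeg_addLeaf_castSucc, hsdeg, if_pos rfl]
      push_cast
      ring
    · rw [image_sdeg_addLeaf_compl, himage, Set.insert_idem]

theorem exists_realizes_insert {D : Set ℤ} (hT : T.Realizes D) (h1 : 1 ∈ D) {x : ℤ}
    (hx : 1 < x) : ∃ T' : SignedTree, T'.Realizes (insert x D) ∧ (T'.n : ℤ) = T.n + (x - 1) := by
  obtain ⟨ℓ, hℓ⟩ : 1 ∈ Set.range T.sdeg := hT ▸ h1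
  obtain ⟨T', a', hn, hsdeg, himage⟩ := exists_addLeaves T ℓ (x - 2).toNat
  refine ⟨T', ?_, by rw [hn]; push_cast; omega⟩
  rw [Realizes, ← Set.insert_image_compl_eq_range, himage, hsdeg, hℓ, ← hℓ,
    Set.insert_image_compl_eq_range, ← hT]
  congr 1
  omega

end AddLeaf

abbrev negativeEdge : SignedTree where
  n := 2
  G := ⊤
  adjDec := inferInstance
  isTree := ⟨connected_top, IsAcyclic.of_card_le_two (by simp)⟩
  sgn _ := false

theorem exists_realizes_one_zero : ∃ T : SignedTree, T.Realizes {1, 0} ∧ T.n = 4 := by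
  have hK : ∀ v, negativeEdge.sdeg v = -1 := by decide
  let T := (negativeEdge.addLeaf (0 : Fin 2)).addLeaf (Fin.castSucc (1 : Fin 2))
  have h00 : T.sdeg (Fin.castSucc (Fin.castSucc 0)) = 0 := by
    rw [sdeg_addLeaf_castSucc, sdeg_addLeaf_castSucc, hK]
    decide
  have h01 : T.sdeg (Fin.castSucc (Fin.castSucc 1)) = 0 := by
    rw [sdeg_addLeaf_castSucc, sdeg_addLeaf_castSucc, hK]
    decide
  have h0l : T.sdeg (Fin.castSucc (Fin.last 2)) = 1 := by
    rw [sdeg_addLeaf_castSucc, sdeg_addLeaf_last]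
    decide
  have hl : T.sdeg (Fin.last 3) = 1 := sdeg_addLeaf_last _ _
  refine ⟨T, Set.Subset.antisymm ?_ ?_, rfl⟩
  · rintro z (rfl | rfl)
    exacts [⟨_, hl⟩, ⟨_, h00⟩]
  · rintro _ ⟨v, rfl⟩
    revert v
    refine Fin.forall_fin_succ'.mpr ⟨Fin.forall_fin_succ'.mpr ⟨Fin.forall_fin_two.mpr ?_, ?_⟩, ?_⟩
    exacts [⟨Or.inr h00, Or.inr h01⟩, Or.inl h0l, Or.inl hl]

theorem exists_realizes_card {X : Finset ℤ} (hx : ∀ x ∈ X, 1 < x) :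
    ∃ T : SignedTree, T.Realizes (insert 1 (insert 0 ↑X)) ∧ (T.n : ℤ) = ∑ x ∈ X, x - #X + 4 := by
  induction X using Finset.induction_on with
  | empty =>
    obtain ⟨T, hT, hn⟩ := exists_realizes_one_zero
    exact ⟨T, by simpa using hT, by simp [hn]⟩
  | insert x X hxX ih =>
    obtain ⟨T, hT, hn⟩ := ih fun y hy => hx y (mem_insert_of_mem hy)
    obtain ⟨T', hT', hn'⟩ := exists_realizes_insert T hT (by simp) (hx x (mem_insert_self x X))
    refine ⟨T', ?_, ?_⟩
    · convert hT' using 1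
      push_cast
      rw [Set.insert_comm x, Set.insert_comm x]
    · rw [hn', hn, sum_insert hxX, card_insert_of_notMem hxX]
      push_cast
      ring

end SignedTree

/-- In an order-optimal signed tree realizing `D = {1, 0} ∪ X`
(`X` a set of distinct integers each greater than 1), if `uv` is the unique negative
edge, then both `u` and `v` have (unsigned) degree 2. -/
theorem stmt_14 (X : Finset ℤ) (hx : ∀ x ∈ X, 1 < x)
    (D : Set ℤ) (hD : D = insert 1 (insert 0 (↑X : Set ℤ)))
    (T : SignedTree) (hreal : T.Realizes D)
    (hopt : ∀ T' : SignedTree, T'.Realizes D → T.n ≤ T'.n)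
    (u v : Fin T.n) (hadj : T.G.Adj u v) (hneg : T.sgn s(u, v) = false)
    (huniq : ∀ e ∈ T.G.edgeSet, T.sgn e = false → e = s(u, v)) :
    T.deg u = 2 ∧ T.deg v = 2 := by
  subst hD
  have h : T.IsUniqueNegEdge u v := ⟨hadj, hneg, huniq⟩
  obtain ⟨T', hT', hn'⟩ := SignedTree.exists_realizes_card hx
  have hle : (T.n : ℤ) ≤ ∑ x ∈ X, x - #X + 4 := hn' ▸ by exact_mod_cast hopt T' hT'
  constructor <;> by_contra hdeg
  · linarith [h.sum_sub_card_add_five_le hx hreal hdeg]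
  · linarith [h.symm.sum_sub_card_add_five_le hx hreal hdeg]
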